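/- arXiv:1503.00572 — 2 statements merged into one kernel-verified Lean document; each statement's English description precedes it below -/
import Mathlib

section
/- Let C ⊆ V be independent in G and ∅ ≠ W ⊆ V∖C. The uniform distribution e_C^W on N_C(W) ∪ W is a vertex of M(G,C) if and only if for any distinct x, y ∈ W there is a path x = x_0 ∼ x_1 ∼ … ∼ x_r = y in G with x_0, x_2, … ∈ W and x_1, x_3, … ∈ N_C(W). -/
/-- The polytope of `C`-modes of a graph `G`, inside the probability simplex. -/
def modePolytope {V : Type*} [Fintype V] (G : SimpleGraph V) (C : Set V) :
    Set (V → ℝ) :=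
  {p | (∀ v, 0 ≤ p v) ∧ (∑ v, p v = 1) ∧ ∀ x ∈ C, ∀ y, G.Adj x y → p y ≤ p x}

/-- The uniform probability distribution on a finite subset. -/
noncomputable def uniformOn {V : Type*} [DecidableEq V] (s : Finset V) : V → ℝ :=
  fun v => if v ∈ s then (s.card : ℝ)⁻¹ else 0

/-- `N_C(W)`: the elements of `C` adjacent to some element of `W`. -/
def modeNbrs {V : Type*} [DecidableEq V] (G : SimpleGraph V) [DecidableRel G.Adj]
    (C W : Finset V) : Finset V :=
  C.filter fun y => ∃ w ∈ W, G.Adj y w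

/-!
Alternating paths are the paths of `G.between W N_C(W)`; put `S = N_C(W) ∪ W`.
If `W` splits into two classes not joined by alternating paths, let `A` be the part of `S`
reachable from one class. Both `A` and `S \ A` contain, with any vertex `y`, every `x ∈ C`
adjacent to `y` (as `C` is independent, `y ∈ W` and `x ∈ N_C(W)`), which puts their uniform
distributions in `M(G,C)`; and `e_C^W = uniformOn S` is a proper convex combination of them.
Conversely, if `e_C^W` lies in an open segment `(q, r)` of `M(G,C)`, then `q` vanishes off `S`,
and the inequality `q y ≤ q x` along an edge `x ∈ C`, `y ∈ W` must be an equality because it is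
one for `e_C^W`. Alternating paths make `q` constant on `S`, hence `q = e_C^W`.
-/

open Finset SimpleGraph

lemma SimpleGraph.Reachable.apply_eq {V β : Type*} {G : SimpleGraph V} {f : V → β}
    (hf : ∀ u v, G.Adj u v → f u = f v) {u v : V} (h : G.Reachable u v) : f u = f v := by
  rw [reachable_iff_reflTransGen] at h
  induction h with
  | refl => rfl
  | tail _ hadj ih => exact ih.trans (hf _ _ hadj)

section AlternatingPath

variable {V : Type*} (G : SimpleGraph V) {W N : Set V}

lemma between_reachable_of_alternating {r : ℕ} {f : ℕ → V}
    (hadj : ∀ i < r, G.Adj (f i) (f (i + 1)))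
    (halt : ∀ i ≤ r, (Even i → f i ∈ W) ∧ (¬ Even i → f i ∈ N)) :
    (G.between W N).Reachable (f 0) (f r) := by
  suffices ∀ i ≤ r, (G.between W N).Reachable (f 0) (f i) from this r le_rfl
  intro i
  induction i with
  | zero => exact fun _ => Reachable.refl _
  | succ i ih =>
    intro hi
    refine (ih (by omega)).trans (Adj.reachable ⟨hadj i hi, ?_⟩)
    have hi' := halt i (by omega)
    have hi1 := halt (i + 1) hi
    rw [Nat.even_add_one] at hi1
    by_cases he : Even i
    · exact Or.inl ⟨hi'.1 he, hi1.2 (not_not.2 he)⟩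
    · exact Or.inr ⟨hi'.2 he, hi1.1 he⟩

lemma exists_alternating_of_between_reachable (hWN : Disjoint W N) {x y : V} (hx : x ∈ W)
    (h : (G.between W N).Reachable x y) :
    ∃ (r : ℕ) (f : ℕ → V), f 0 = x ∧ f r = y ∧
      (∀ i < r, G.Adj (f i) (f (i + 1))) ∧
      (∀ i ≤ r, (Even i → f i ∈ W) ∧ (¬ Even i → f i ∈ N)) := by
  obtain ⟨p⟩ := h
  refine ⟨p.length, p.getVert, p.getVert_zero, p.getVert_length,
    fun i hi => (p.adj_getVert_succ hi).1, fun i => ?_⟩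
  induction i with
  | zero => exact fun _ => ⟨fun _ => p.getVert_zero.symm ▸ hx, fun h => absurd Even.zero h⟩
  | succ i ih =>
    intro hi
    obtain ⟨hiW, hiN⟩ := ih (by omega)
    have hstep := (p.adj_getVert_succ (i := i) (by omega)).2
    have hdisj := Set.disjoint_left.1 hWN
    rw [Nat.even_add_one]
    by_cases he : Even i
    · have hiN' := hdisj (hiW he)
      exact ⟨absurd he, fun _ => (hstep.resolve_right fun h => hiN' h.1).2⟩
    · have hiW' : p.getVert i ∉ W := fun h => hdisj h (hiN he)
      exact ⟨fun _ => (hstep.resolve_left fun h => hiW' h.1).2, fun h => (h he).elim⟩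

lemma between_reachable_iff_exists_alternating (hWN : Disjoint W N) {x y : V} (hx : x ∈ W) :
    (G.between W N).Reachable x y ↔
      ∃ (r : ℕ) (f : ℕ → V), f 0 = x ∧ f r = y ∧
        (∀ i < r, G.Adj (f i) (f (i + 1))) ∧
        (∀ i ≤ r, (Even i → f i ∈ W) ∧ (¬ Even i → f i ∈ N)) := by
  refine ⟨exists_alternating_of_between_reachable G hWN hx, ?_⟩
  rintro ⟨r, f, rfl, rfl, hadj, halt⟩
  exact between_reachable_of_alternating G hadj halt

end AlternatingPath

section Uniform

variable {V : Type*} [DecidableEq V]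

lemma uniformOn_of_mem {s : Finset V} {v : V} (hv : v ∈ s) : uniformOn s v = (#s : ℝ)⁻¹ :=
  if_pos hv

lemma uniformOn_of_notMem {s : Finset V} {v : V} (hv : v ∉ s) : uniformOn s v = 0 :=
  if_neg hv

lemma uniformOn_nonneg (s : Finset V) (v : V) : 0 ≤ uniformOn s v := by
  unfold uniformOn
  split_ifs <;> positivity

lemma uniformOn_mem_openSegment {s t : Finset V} (hts : t ⊆ s) (ht : t.Nonempty)
    (hst : (s \ t).Nonempty) :
    uniformOn s ∈ openSegment ℝ (uniformOn t) (uniformOn (s \ t)) := by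
  have hcard : (#(s \ t) : ℝ) + #t = #s := by exact_mod_cast card_sdiff_add_card_eq_card hts
  have hs : (0 : ℝ) < #s := by exact_mod_cast (ht.mono hts).card_pos
  have ht' : (0 : ℝ) < #t := by exact_mod_cast ht.card_pos
  have hst' : (0 : ℝ) < #(s \ t) := by exact_mod_cast hst.card_pos
  refine ⟨#t / #s, #(s \ t) / #s, by positivity, by positivity, ?_, ?_⟩
  · rw [← add_div, add_comm, hcard, div_self hs.ne']
  · funext v
    simp only [Pi.add_apply, Pi.smul_apply, smul_eq_mul]
    by_cases hvt : v ∈ t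
    · rw [uniformOn_of_mem hvt, uniformOn_of_mem (hts hvt),
        uniformOn_of_notMem fun h => (mem_sdiff.1 h).2 hvt, mul_zero, add_zero]
      field_simp
    by_cases hvs : v ∈ s
    · rw [uniformOn_of_notMem hvt, uniformOn_of_mem hvs,
        uniformOn_of_mem (mem_sdiff.2 ⟨hvs, hvt⟩), mul_zero, zero_add]
      field_simp
    · rw [uniformOn_of_notMem hvt, uniformOn_of_notMem hvs,
        uniformOn_of_notMem fun h => hvs (mem_sdiff.1 h).1]
      ring

variable [Fintype V]

lemma sum_uniformOn {s : Finset V} (hs : s.Nonempty) : ∑ v, uniformOn s v = 1 := by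
  simp [uniformOn, Finset.sum_ite_mem, hs.card_pos.ne']

lemma eq_uniformOn_of_forall_eq {q : V → ℝ} {s : Finset V} (hsum : ∑ v, q v = 1)
    (hzero : ∀ v ∉ s, q v = 0) (hconst : ∀ u ∈ s, ∀ v ∈ s, q u = q v) : q = uniformOn s := by
  funext v
  by_cases hv : v ∈ s
  · rw [uniformOn_of_mem hv]
    refine eq_inv_of_mul_eq_one_right ?_
    rw [← hsum, ← sum_subset (subset_univ s) fun u _ hu => hzero u hu,
      sum_congr rfl fun u hu => hconst u hu v hv, sum_const, nsmul_eq_mul]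
  · rw [hzero v hv, uniformOn_of_notMem hv]

end Uniform

section ModePolytope

variable {V : Type*} [Fintype V] {G : SimpleGraph V} {C : Set V} {p q r : V → ℝ}

lemma uniformOn_mem_modePolytope [DecidableEq V] {s : Finset V} (hs : s.Nonempty)
    (hclosed : ∀ x ∈ C, ∀ y, G.Adj x y → y ∈ s → x ∈ s) :
    uniformOn s ∈ modePolytope G C := by
  refine ⟨uniformOn_nonneg s, sum_uniformOn hs, fun x hx y hxy => ?_⟩
  by_cases hy : y ∈ s
  · rw [uniformOn_of_mem hy, uniformOn_of_mem (hclosed x hx y hxy hy)]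
  · rw [uniformOn_of_notMem hy]
    exact uniformOn_nonneg s x

lemma modePolytope_apply_eq_zero_of_mem_openSegment (hq : q ∈ modePolytope G C)
    (hr : r ∈ modePolytope G C) (hp : p ∈ openSegment ℝ q r) {v : V} (hv : p v = 0) :
    q v = 0 := by
  obtain ⟨a, b, ha, hb, -, rfl⟩ := hp
  simp only [Pi.add_apply, Pi.smul_apply, smul_eq_mul] at hv
  nlinarith [hq.1 v, hr.1 v]

lemma modePolytope_apply_eq_of_mem_openSegment (hq : q ∈ modePolytope G C)
    (hr : r ∈ modePolytope G C) (hp : p ∈ openSegment ℝ q r) {x y : V} (hx : x ∈ C)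
    (hxy : G.Adj x y) (hpxy : p y = p x) : q y = q x := by
  obtain ⟨a, b, ha, hb, -, rfl⟩ := hp
  simp only [Pi.add_apply, Pi.smul_apply, smul_eq_mul] at hpxy
  have hqxy := hq.2.2 x hx y hxy
  have hrxy := hr.2.2 x hx y hxy
  refine le_antisymm hqxy ?_
  nlinarith

end ModePolytope

section ExtremePoint

variable {V : Type*} [DecidableEq V] (G : SimpleGraph V) [DecidableRel G.Adj] {C W : Finset V}

lemma mem_modeNbrs_of_adj_mem_union (hInd : ∀ x ∈ C, ∀ y ∈ C, ¬ G.Adj x y) {x y : V}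
    (hx : x ∈ C) (hxy : G.Adj x y) (hy : y ∈ modeNbrs G C W ∪ W) :
    x ∈ modeNbrs G C W ∧ y ∈ W := by
  rcases mem_union.1 hy with hyN | hyW
  · exact absurd hxy (hInd x hx y (mem_filter.1 hyN).1)
  · exact ⟨mem_filter.2 ⟨hx, y, hyW, hxy⟩, hyW⟩

variable [Fintype V]

lemma uniformOn_modeNbrs_union_mem_modePolytope (hInd : ∀ x ∈ C, ∀ y ∈ C, ¬ G.Adj x y)
    (hW : W.Nonempty) :
    uniformOn (modeNbrs G C W ∪ W) ∈ modePolytope G C :=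
  uniformOn_mem_modePolytope (hW.mono subset_union_right) fun _ hx _ hxy hy =>
    mem_union_left _ (mem_modeNbrs_of_adj_mem_union G hInd hx hxy hy).1

lemma uniformOn_filter_mem_modePolytope (hInd : ∀ x ∈ C, ∀ y ∈ C, ¬ G.Adj x y)
    {P : V → Prop} [DecidablePred P]
    (hP : ∀ x y, (G.between W (modeNbrs G C W)).Adj x y → (P x ↔ P y))
    (hne : ((modeNbrs G C W ∪ W).filter P).Nonempty) :
    uniformOn ((modeNbrs G C W ∪ W).filter P) ∈ modePolytope G C := by
  refine uniformOn_mem_modePolytope hne fun x hx y hxy hy => ?_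
  rw [mem_filter] at hy ⊢
  obtain ⟨hxN, hyW⟩ := mem_modeNbrs_of_adj_mem_union G hInd hx hxy hy.1
  exact ⟨mem_union_left _ hxN, (hP x y ⟨hxy, Or.inr ⟨hxN, hyW⟩⟩).2 hy.2⟩

lemma between_reachable_of_uniformOn_mem_extremePoints
    (hInd : ∀ x ∈ C, ∀ y ∈ C, ¬ G.Adj x y)
    (h : uniformOn (modeNbrs G C W ∪ W) ∈ (modePolytope G C).extremePoints ℝ)
    {x y : V} (hx : x ∈ W) (hy : y ∈ W) : (G.between W (modeNbrs G C W)).Reachable x y := by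
  set H := G.between W (modeNbrs G C W)
  set S := modeNbrs G C W ∪ W
  by_contra hxy
  have hinv (u v : V) (huv : H.Adj u v) : H.Reachable x u ↔ H.Reachable x v :=
    ⟨fun h => h.trans huv.reachable, fun h => h.trans huv.symm.reachable⟩
  have hxA : x ∈ S.filter (H.Reachable x) := mem_filter.2 ⟨mem_union_right _ hx, .refl x⟩
  have hyB : y ∈ S.filter (¬ H.Reachable x ·) := mem_filter.2 ⟨mem_union_right _ hy, hxy⟩
  have hA := uniformOn_filter_mem_modePolytope G hInd hinv ⟨x, hxA⟩
  have hB := uniformOn_filter_mem_modePolytope G hInd (fun u v huv => not_congr (hinv u v huv))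
    ⟨y, hyB⟩
  rw [filter_not] at hyB hB
  have heq := h.2 hA hB (uniformOn_mem_openSegment (filter_subset _ S) ⟨x, hxA⟩ ⟨y, hyB⟩)
  have hy' := congrFun heq y
  rw [uniformOn_of_notMem (mem_sdiff.1 hyB).2, uniformOn_of_mem (mem_union_right _ hy)] at hy'
  exact (inv_pos.2 (Nat.cast_pos.2 (card_pos.2 ⟨y, mem_union_right _ hy⟩))).ne hy'

lemma uniformOn_mem_extremePoints_of_between_reachable
    (hInd : ∀ x ∈ C, ∀ y ∈ C, ¬ G.Adj x y) (hW : W.Nonempty)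
    (h : ∀ x ∈ W, ∀ y ∈ W, (G.between W (modeNbrs G C W)).Reachable x y) :
    uniformOn (modeNbrs G C W ∪ W) ∈ (modePolytope G C).extremePoints ℝ := by
  set H := G.between W (modeNbrs G C W)
  set S := modeNbrs G C W ∪ W
  refine ⟨uniformOn_modeNbrs_union_mem_modePolytope G hInd hW, fun q hq r hr hseg => ?_⟩
  have hnbr {c w : V} (hc : c ∈ modeNbrs G C W) (hw : w ∈ W) (hcw : G.Adj c w) :
      q w = q c :=
    modePolytope_apply_eq_of_mem_openSegment hq hr hseg (mem_filter.1 hc).1 hcw <| by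
      rw [uniformOn_of_mem (mem_union_right _ hw), uniformOn_of_mem (mem_union_left _ hc)]
  have hadj (u v : V) (huv : H.Adj u v) : q u = q v := by
    obtain ⟨huv, ⟨huW, hvN⟩ | ⟨huN, hvW⟩⟩ := huv
    · exact hnbr hvN huW huv.symm
    · exact (hnbr huN hvW huv).symm
  obtain ⟨w₀, hw₀⟩ := hW
  have hS (v : V) (hv : v ∈ S) : H.Reachable w₀ v := by
    rcases mem_union.1 hv with hvN | hvW
    · obtain ⟨w, hw, hvw⟩ := (mem_filter.1 hvN).2
      exact (h w₀ hw₀ w hw).trans (Adj.reachable ⟨hvw.symm, Or.inl ⟨hw, hvN⟩⟩)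
    · exact h w₀ hw₀ v hvW
  refine eq_uniformOn_of_forall_eq hq.2.1
    (fun v hv => modePolytope_apply_eq_zero_of_mem_openSegment hq hr hseg (uniformOn_of_notMem hv))
    fun u hu v hv => ((hS u hu).symm.trans (hS v hv)).apply_eq hadj

end ExtremePoint

/-- For an independent set `C` and a nonempty `W ⊆ V∖C`, the uniform distribution
`e_C^W` on `N_C(W) ∪ W` is a vertex (extreme point) of `M(G,C)` if and only if every
two distinct elements of `W` are joined by an alternating path, i.e.\ a path in `G`
whose even-indexed vertices lie in `W` and odd-indexed vertices lie in `N_C(W)`. -/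
theorem uniform_extremePoint_iff_alternating_path {V : Type*} [Fintype V]
    [DecidableEq V] (G : SimpleGraph V) [DecidableRel G.Adj] (C W : Finset V)
    (hInd : ∀ x ∈ C, ∀ y ∈ C, ¬ G.Adj x y)
    (hW : W.Nonempty) (hWC : ∀ w ∈ W, w ∉ C) :
    uniformOn (modeNbrs G C W ∪ W) ∈ (modePolytope G ↑C).extremePoints ℝ ↔
      ∀ x ∈ W, ∀ y ∈ W, x ≠ y →
        ∃ (r : ℕ) (f : ℕ → V), f 0 = x ∧ f r = y ∧
          (∀ i < r, G.Adj (f i) (f (i + 1))) ∧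
          (∀ i ≤ r, (Even i → f i ∈ W) ∧ (¬ Even i → f i ∈ modeNbrs G C W)) := by
  have hWN : Disjoint (W : Set V) (modeNbrs G C W) :=
    Set.disjoint_left.2 fun w hw hwN => hWC w hw (mem_filter.1 hwN).1
  constructor
  · intro h x hx y hy _
    exact (between_reachable_iff_exists_alternating G hWN hx).1
      (between_reachable_of_uniformOn_mem_extremePoints G hInd h hx hy)
  · refine fun h => uniformOn_mem_extremePoints_of_between_reachable G hInd hW fun x hx y hy => ?_
    obtain rfl | hxy := eq_or_ne x y
    · rfl
    · exact (between_reachable_iff_exists_alternating G hWN hx).2 (h x hx y hy hxy)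
end

section
/- Let C ⊆ V be independent in G. For each x ∈ V∖C, the inequality p_x ≥ 0 defines a facet of M(G,C), i.e., the face {p ∈ M(G,C) : p_x = 0} has dimension |V| - 2. -/
/-!
The face lies in the affine subspace `{p | ∑ v, p v = 1, p x = 0}`, whose direction is the kernel
of the surjection `p ↦ (∑ v, p v, p x)` onto `ℝ²` and so has dimension `|V| - 2`. Conversely, the
face contains a relatively open piece of that subspace: normalising the weights `0` at `x`, `2` on
`C` and `1` elsewhere gives a point of the face at which all the other inequalities are strict
(here one uses that `C` is independent and `x ∉ C`), so every small perturbation inside the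
subspace stays in the face. When `|V| = 1` the face is empty and has dimension `-1`.
-/

open scoped Classical

/-- The affine dimension of a subset of `V → ℝ`, with `dim ∅ = -1`. -/
noncomputable def affDim {V : Type*} (s : Set (V → ℝ)) : ℤ :=
  if s = ∅ then -1 else (Module.finrank ℝ (affineSpan ℝ s).direction : ℤ)

open Finset

theorem direction_affineSpan_le_ker {k E F : Type*} [Ring k] [AddCommGroup E] [Module k E]
    [AddCommGroup F] [Module k F] {s : Set E} (L : E →ₗ[k] F) {c : F}
    (h : ∀ p ∈ s, L p = c) : (affineSpan k s).direction ≤ LinearMap.ker L := by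
  rw [direction_affineSpan, vectorSpan_def, Submodule.span_le]
  rintro _ ⟨p, hp, q, hq, rfl⟩
  simp [h p hp, h q hq]

theorem le_direction_affineSpan_of_norm_le {E : Type*} [NormedAddCommGroup E] [NormedSpace ℝ E]
    {s : Set E} {q : E} {K : Submodule ℝ E} {δ : ℝ} (hδ : 0 < δ)
    (h : ∀ w ∈ K, ‖w‖ ≤ δ → q + w ∈ s) : K ≤ (affineSpan ℝ s).direction := by
  intro w hw
  rcases eq_or_ne w 0 with rfl | hw0
  · exact Submodule.zero_mem _
  have hc : δ / ‖w‖ ≠ 0 := div_ne_zero hδ.ne' (norm_ne_zero_iff.mpr hw0)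
  have hcw : ‖(δ / ‖w‖) • w‖ ≤ δ := by
    rw [norm_smul, Real.norm_of_nonneg (by positivity),
      div_mul_cancel₀ _ (norm_ne_zero_iff.mpr hw0)]
  have hq : q ∈ s := by simpa using h 0 K.zero_mem (by simpa using hδ.le)
  refine (Submodule.smul_mem_iff _ hc).mp ?_
  simpa using AffineSubspace.vsub_mem_direction
    (subset_affineSpan ℝ s (h _ (K.smul_mem _ hw) hcw)) (subset_affineSpan ℝ s hq)

theorem affDim_of_nonempty {V : Type*} {s : Set (V → ℝ)} (hs : s.Nonempty) :
    affDim s = Module.finrank ℝ (affineSpan ℝ s).direction := by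
  rw [affDim, if_neg hs.ne_empty]

section SumEval

variable {V : Type*} [Fintype V]

noncomputable def sumEval (x : V) : (V → ℝ) →ₗ[ℝ] ℝ × ℝ :=
  (∑ v, LinearMap.proj v).prod (LinearMap.proj x)

@[simp]
theorem sumEval_apply (x : V) (p : V → ℝ) : sumEval x p = (∑ v, p v, p x) := by
  simp [sumEval]

theorem sumEval_surjective {x u : V} (hu : u ≠ x) : Function.Surjective (sumEval x) := by
  rintro ⟨a, b⟩
  refine ⟨Pi.single x b + Pi.single u (a - b), ?_⟩
  simp [sum_add_distrib, hu]

theorem finrank_ker_sumEval {x u : V} (hu : u ≠ x) :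
    Module.finrank ℝ (LinearMap.ker (sumEval x)) = Fintype.card V - 2 := by
  have h := LinearMap.finrank_range_add_finrank_ker (sumEval x)
  rw [LinearMap.range_eq_top.mpr (sumEval_surjective hu), finrank_top,
    Module.finrank_prod, Module.finrank_self, Module.finrank_fintype_fun_eq_card] at h
  omega

end SumEval

section ModeWeight

variable {V : Type*} {G : SimpleGraph V} {C : Set V} {x : V}

noncomputable def modeWeight (C : Set V) (x v : V) : ℝ :=
  if v = x then 0 else if v ∈ C then 2 else 1

theorem modeWeight_nonneg (v : V) : 0 ≤ modeWeight C x v := by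
  unfold modeWeight; split_ifs <;> norm_num

theorem one_le_modeWeight {v : V} (hv : v ≠ x) : 1 ≤ modeWeight C x v := by
  simp only [modeWeight, if_neg hv]; split_ifs <;> norm_num

theorem modeWeight_add_one_le (hInd : ∀ x ∈ C, ∀ y ∈ C, ¬ G.Adj x y) (hx : x ∉ C) {a y : V}
    (ha : a ∈ C) (hay : G.Adj a y) : modeWeight C x y + 1 ≤ modeWeight C x a := by
  have hax : a ≠ x := fun h => hx (h ▸ ha)
  have hy : y ∉ C := fun hy => hInd a ha y hy hay
  unfold modeWeight; split_ifs <;> norm_num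

end ModeWeight

section ModePolytope

variable {V : Type*} [Fintype V] {G : SimpleGraph V} {C : Set V} {x : V}

def positivityFace (G : SimpleGraph V) (C : Set V) (x : V) : Set (V → ℝ) :=
  {p | p ∈ modePolytope G C ∧ p x = 0}

theorem sumEval_of_mem_positivityFace {p : V → ℝ} (hp : p ∈ positivityFace G C x) :
    sumEval x p = (1, 0) := by
  obtain ⟨⟨-, hsum, -⟩, hpx⟩ := hp
  simp [hsum, hpx]

theorem positivityFace_eq_empty_of_card_le_one (hV : Fintype.card V ≤ 1) :
    positivityFace G C x = ∅ := by
  refine Set.eq_empty_of_forall_notMem fun p hp => ?_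
  have : Subsingleton V := Fintype.card_le_one_iff_subsingleton.mp hV
  have h := sumEval_of_mem_positivityFace hp
  rw [sumEval_apply, Fintype.sum_subsingleton _ x, Prod.mk.injEq] at h
  exact one_ne_zero (h.1.symm.trans h.2)

theorem add_mem_positivityFace {q w : V → ℝ} {δ : ℝ} (hqx : q x = 0) (hqsum : ∑ v, q v = 1)
    (hpos : ∀ v ≠ x, δ ≤ q v) (hgap : ∀ a ∈ C, ∀ y, G.Adj a y → q y + δ ≤ q a)
    (hw : w ∈ LinearMap.ker (sumEval x)) (hwδ : ‖w‖ ≤ δ / 2) :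
    q + w ∈ positivityFace G C x := by
  have hwv (v : V) : |w v| ≤ δ / 2 := (norm_le_pi_norm w v).trans hwδ
  simp only [LinearMap.mem_ker, sumEval_apply, Prod.mk_eq_zero] at hw
  refine ⟨⟨fun v => ?_, ?_, fun a ha y hay => ?_⟩, by simp [hqx, hw.2]⟩
  · rcases eq_or_ne v x with rfl | hv
    · simp [hqx, hw.2]
    · simp only [Pi.add_apply]
      linarith [hpos v hv, neg_abs_le (w v), abs_nonneg (w v), hwv v]
  · simp [sum_add_distrib, hqsum, hw.1]
  · simp only [Pi.add_apply]
    linarith [hgap a ha y hay, le_abs_self (w y), neg_abs_le (w a), hwv a, hwv y]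

theorem exists_ball_subset_positivityFace (hInd : ∀ x ∈ C, ∀ y ∈ C, ¬ G.Adj x y) (hx : x ∉ C)
    {u : V} (hu : u ≠ x) : ∃ q : V → ℝ, ∃ δ > 0,
      ∀ w ∈ LinearMap.ker (sumEval x), ‖w‖ ≤ δ → q + w ∈ positivityFace G C x := by
  set s := ∑ v, modeWeight C x v
  have hs : 0 < s := lt_of_lt_of_le one_pos <| (one_le_modeWeight hu).trans <|
    single_le_sum (fun v _ => modeWeight_nonneg v) (mem_univ u)
  refine ⟨s⁻¹ • modeWeight C x, s⁻¹ / 2, by positivity,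
    fun w hw hwδ => add_mem_positivityFace ?_ ?_ ?_ ?_ hw hwδ⟩
  · simp [modeWeight]
  · simp [← mul_sum, s, hs.ne']
  · intro v hv
    simpa using mul_le_mul_of_nonneg_left (one_le_modeWeight hv) (inv_pos.mpr hs).le
  · intro a ha y hay
    simpa [mul_add] using
      mul_le_mul_of_nonneg_left (modeWeight_add_one_le hInd hx ha hay) (inv_pos.mpr hs).le

end ModePolytope

/-- For an independent `C` and `x ∉ C`, the inequality `p x ≥ 0` defines a facet of
the mode polytope: the corresponding face has dimension `|V| - 2`. -/
theorem positivity_facet_of_modePolytope {V : Type*} [Fintype V]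
    (G : SimpleGraph V) (C : Set V)
    (hInd : ∀ x ∈ C, ∀ y ∈ C, ¬ G.Adj x y) (x : V) (hx : x ∉ C) :
    affDim {p | p ∈ modePolytope G C ∧ p x = 0} = (Fintype.card V : ℤ) - 2 := by
  change affDim (positivityFace G C x) = _
  rcases le_or_gt (Fintype.card V) 1 with hV | hV
  · rw [positivityFace_eq_empty_of_card_le_one hV, affDim, if_pos rfl]
    have := Fintype.card_pos_iff.mpr ⟨x⟩
    omega
  obtain ⟨u, hu⟩ := Fintype.exists_ne_of_one_lt_card hV x
  obtain ⟨q, δ, hδ, hball⟩ := exists_ball_subset_positivityFace hInd hx hu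
  have hq : q ∈ positivityFace G C x := by
    simpa using hball 0 (Submodule.zero_mem _) (by simpa using hδ.le)
  have hdir : (affineSpan ℝ (positivityFace G C x)).direction = LinearMap.ker (sumEval x) :=
    le_antisymm (direction_affineSpan_le_ker _ fun _ => sumEval_of_mem_positivityFace)
      (le_direction_affineSpan_of_norm_le hδ hball)
  rw [affDim_of_nonempty ⟨q, hq⟩, hdir, finrank_ker_sumEval hu]
  omega
end
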